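/- arXiv:2308.13166 — 3 statements merged into one kernel-verified Lean document; each statement's English description precedes it below -/
import Mathlib

section
/- Let Y be a real random variable with |Y| ≤ C almost surely for some C > 0 and mean y := E[Y], and let ε > 0. Let v : ℝ → ℝ be Borel measurable, twice continuously differentiable on [y − ε, y + ε] with |v''(s)| ≤ H_v for all s ∈ [y − ε, y + ε], and with |v(s)| ≤ v̄ for all s ∈ [−C, C]. Then |E[v(Y)] − v(y)| ≤ (H_v/2)·ε² + (2·v̄ + 2·C·|v'(y)|)·P(|Y − y| > ε). -/
/-!
On the event `|Y - y| ≤ ε` the second-order Taylor bound `|v''| ≤ H` controls the first-order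
remainder `v(Y) - v(y) - v'(y)(Y - y)` by `H ε² / 2`; on the tail event `|v| ≤ v̄` and
`|Y - y| ≤ 2C` control it by `2v̄ + 2C|v'(y)|`. Since `E[Y - y] = 0`, the expectation of this
remainder is exactly `E[v(Y)] - v(y)`.
-/

open MeasureTheory Set

section Taylor

variable {E : Type*} [NormedAddCommGroup E] [NormedSpace ℝ E] {f f' f'' : ℝ → E} {H : ℝ}

theorem norm_sub_sub_smul_le_of_norm_deriv2_le_Icc {a b : ℝ}
    (hf : ∀ t ∈ Icc a b, HasDerivWithinAt f (f' t) (Icc a b) t)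
    (hf' : ∀ t ∈ Icc a b, HasDerivWithinAt f' (f'' t) (Icc a b) t)
    (hH : ∀ t ∈ Icc a b, ‖f'' t‖ ≤ H) {x : ℝ} (hx : x ∈ Icc a b) :
    ‖f x - f a - (x - a) • f' a‖ ≤ H / 2 * (x - a) ^ 2 := by
  have ha : a ∈ Icc a b := ⟨le_rfl, hx.1.trans hx.2⟩
  have hlip : ∀ t ∈ Icc a b, ‖f' t - f' a‖ ≤ H * (t - a) := fun t ht => by
    simpa [Real.norm_eq_abs, abs_of_nonneg (sub_nonneg.2 ht.1)] using
      (convex_Icc a b).norm_image_sub_le_of_norm_hasDerivWithin_le hf' hH ha ht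
  refine image_norm_le_of_norm_deriv_right_le_deriv_boundary
    (f := fun t => f t - f a - (t - a) • f' a) (f' := fun t => f' t - f' a)
    (B := fun t => H / 2 * (t - a) ^ 2) (B' := fun t => H * (t - a))
    (fun t ht => ((hf t ht).continuousWithinAt.sub continuousWithinAt_const).sub
      ((continuousWithinAt_id.sub continuousWithinAt_const).smul continuousWithinAt_const))
    (fun t ht => ?_) (by simp) (fun t => ?_) (fun t ht => hlip t (Ico_subset_Icc_self ht)) hx
  · have := ((hf t (Ico_subset_Icc_self ht)).sub_const (f a)).sub
      (((hasDerivWithinAt_id t _).sub_const a).smul_const (f' a))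
    exact (this.mono_of_mem_nhdsWithin (Icc_mem_nhdsGE_of_mem ht)).congr_deriv (by simp)
  · exact ((((hasDerivAt_id t).sub_const a).pow 2).const_mul (H / 2)).congr_deriv (by simp; ring)

theorem Convex.norm_sub_sub_smul_le_of_norm_deriv2_le {s : Set ℝ} (hs : Convex ℝ s)
    (hf : ∀ t ∈ s, HasDerivWithinAt f (f' t) s t)
    (hf' : ∀ t ∈ s, HasDerivWithinAt f' (f'' t) s t)
    (hH : ∀ t ∈ s, ‖f'' t‖ ≤ H) {x y : ℝ} (hx : x ∈ s) (hy : y ∈ s) :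
    ‖f x - f y - (x - y) • f' y‖ ≤ H / 2 * (x - y) ^ 2 := by
  set φ : ℝ → ℝ := fun t => y + t * (x - y)
  have hφ : MapsTo φ (Icc 0 1) s := fun t ht => hs.add_smul_sub_mem hy hx ht
  have hφ' (t : ℝ) : HasDerivWithinAt φ (x - y) (Icc 0 1) t :=
    (((hasDerivAt_id t).mul_const (x - y)).const_add y).hasDerivWithinAt.congr_deriv (one_mul _)
  have := norm_sub_sub_smul_le_of_norm_deriv2_le_Icc (f := f ∘ φ)
    (f' := fun t => (x - y) • f' (φ t)) (f'' := fun t => (x - y) • (x - y) • f'' (φ t))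
    (H := (x - y) ^ 2 * H) (a := 0) (b := 1)
    (fun t ht => (hf _ (hφ ht)).scomp t (hφ' t) hφ)
    (fun t ht => ((hf' _ (hφ ht)).scomp t (hφ' t) hφ).const_smul (x - y))
    (fun t ht => by
      rw [norm_smul, norm_smul, ← mul_assoc, Real.norm_eq_abs, ← sq, sq_abs]
      exact mul_le_mul_of_nonneg_left (hH _ (hφ ht)) (sq_nonneg _))
    (x := 1) ⟨zero_le_one, le_rfl⟩
  simp only [Function.comp_apply, one_mul, add_sub_cancel, zero_mul, add_zero, sub_zero, one_smul,
    one_pow, mul_one, φ] at this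
  exact this.trans_eq (by ring)

end Taylor

theorem abs_sub_sub_mul_sub_le_of_abs_deriv2_le {v v' v'' : ℝ → ℝ} {y ε H : ℝ}
    (hv : ∀ s ∈ Icc (y - ε) (y + ε), HasDerivWithinAt v (v' s) (Icc (y - ε) (y + ε)) s)
    (hv' : ∀ s ∈ Icc (y - ε) (y + ε), HasDerivWithinAt v' (v'' s) (Icc (y - ε) (y + ε)) s)
    (hH : ∀ s ∈ Icc (y - ε) (y + ε), |v'' s| ≤ H) {x : ℝ} (hx : |x - y| ≤ ε) :
    |v x - v y - v' y * (x - y)| ≤ H / 2 * ε ^ 2 := by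
  obtain ⟨hlo, hhi⟩ := abs_le.1 hx
  have hy : y ∈ Icc (y - ε) (y + ε) := ⟨by linarith, by linarith⟩
  have hH₀ : 0 ≤ H := (abs_nonneg _).trans (hH y hy)
  have := (convex_Icc (y - ε) (y + ε)).norm_sub_sub_smul_le_of_norm_deriv2_le hv hv' hH
    (x := x) ⟨by linarith, by linarith⟩ hy
  rw [smul_eq_mul, mul_comm] at this
  exact this.trans (mul_le_mul_of_nonneg_left (sq_le_sq' hlo hhi) (by positivity))

theorem abs_sub_sub_mul_sub_le_of_abs_le {v : ℝ → ℝ} {C vbar : ℝ}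
    (hv : ∀ s ∈ Icc (-C) C, |v s| ≤ vbar) {x y : ℝ} (hx : x ∈ Icc (-C) C) (hy : y ∈ Icc (-C) C)
    (c : ℝ) : |v x - v y - c * (x - y)| ≤ 2 * vbar + 2 * C * |c| := by
  have hxy : |x - y| ≤ 2 * C := abs_le.2 ⟨by linarith [hx.1, hy.2], by linarith [hx.2, hy.1]⟩
  calc |v x - v y - c * (x - y)| ≤ |v x| + |v y| + |c| * |x - y| :=
        (abs_sub _ _).trans (by rw [abs_mul]; gcongr; exact abs_sub _ _)
    _ ≤ vbar + vbar + |c| * (2 * C) := by gcongr; exacts [hv x hx, hv y hy]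
    _ = 2 * vbar + 2 * C * |c| := by ring

theorem norm_integral_le_of_norm_le_const_on_set_and_compl {Ω E : Type*} [MeasurableSpace Ω]
    [NormedAddCommGroup E] [NormedSpace ℝ E] {μ : Measure Ω} [IsFiniteMeasure μ] {g : Ω → E}
    (hg : Integrable g μ) {s : Set Ω} (hs : NullMeasurableSet s μ) {a b : ℝ}
    (ha : ∀ᵐ ω ∂μ, ω ∈ s → ‖g ω‖ ≤ a) (hb : ∀ᵐ ω ∂μ, ω ∉ s → ‖g ω‖ ≤ b) :
    ‖∫ ω, g ω ∂μ‖ ≤ a * μ.real s + b * μ.real sᶜ := by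
  rw [← integral_add_compl₀ hs hg]
  exact (norm_add_le _ _).trans (add_le_add
    (norm_setIntegral_le_of_norm_le_const_ae' (measure_lt_top _ _) ha)
    (norm_setIntegral_le_of_norm_le_const_ae' (measure_lt_top _ _) hb))

theorem abs_integral_comp_sub_comp_integral_le {Ω : Type*} [MeasurableSpace Ω] {μ : Measure Ω}
    [IsProbabilityMeasure μ] {Y : Ω → ℝ} (hY : Integrable Y μ) {v : ℝ → ℝ}
    (hvY : Integrable (fun ω => v (Y ω)) μ) (c : ℝ) {s : Set Ω} (hs : NullMeasurableSet s μ)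
    {a b : ℝ} (ha₀ : 0 ≤ a)
    (ha : ∀ᵐ ω ∂μ, ω ∉ s → |v (Y ω) - v (∫ ω, Y ω ∂μ) - c * (Y ω - ∫ ω, Y ω ∂μ)| ≤ a)
    (hb : ∀ᵐ ω ∂μ, ω ∈ s → |v (Y ω) - v (∫ ω, Y ω ∂μ) - c * (Y ω - ∫ ω, Y ω ∂μ)| ≤ b) :
    |(∫ ω, v (Y ω) ∂μ) - v (∫ ω, Y ω ∂μ)| ≤ a + b * μ.real s := by
  set m := ∫ ω, Y ω ∂μ
  have hlin : Integrable (fun ω => c * (Y ω - m)) μ := (hY.sub (integrable_const m)).const_mul c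
  have hcentre : (∫ ω, v (Y ω) ∂μ) - v m = ∫ ω, (v (Y ω) - v m - c * (Y ω - m)) ∂μ := by
    rw [integral_sub (f := fun ω => v (Y ω) - v m) (hvY.sub (integrable_const _)) hlin,
      integral_sub hvY (integrable_const _), integral_const_mul, integral_sub hY (integrable_const m)]
    simp [m]
  rw [hcentre, ← Real.norm_eq_abs]
  have hsplit := norm_integral_le_of_norm_le_const_on_set_and_compl
    (g := fun ω => v (Y ω) - v m - c * (Y ω - m)) ((hvY.sub (integrable_const _)).sub hlin) hs hb ha
  have hcompl := mul_le_of_le_one_right ha₀ (measureReal_le_one (μ := μ) (s := sᶜ))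
  linarith

theorem second_order_truncation_bound_general
    {Ω : Type*} [MeasurableSpace Ω] (μ : Measure Ω) [IsProbabilityMeasure μ]
    (Y : Ω → ℝ) (hY : AEMeasurable Y μ)
    (C : ℝ) (hbound : ∀ᵐ ω ∂μ, |Y ω| ≤ C)
    (y : ℝ) (hy : y = ∫ ω, Y ω ∂μ)
    (ε : ℝ) (hε : 0 < ε)
    (v v' v'' : ℝ → ℝ) (hv : Measurable v)
    (hderiv1 : ∀ s ∈ Set.Icc (y - ε) (y + ε),
      HasDerivWithinAt v (v' s) (Set.Icc (y - ε) (y + ε)) s)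
    (hderiv2 : ∀ s ∈ Set.Icc (y - ε) (y + ε),
      HasDerivWithinAt v' (v'' s) (Set.Icc (y - ε) (y + ε)) s)
    (H : ℝ) (hH : ∀ s ∈ Set.Icc (y - ε) (y + ε), |v'' s| ≤ H)
    (vbar : ℝ) (hvbd : ∀ s ∈ Set.Icc (-C) C, |v s| ≤ vbar) :
    |(∫ ω, v (Y ω) ∂μ) - v y|
      ≤ H / 2 * ε ^ 2
        + (2 * vbar + 2 * C * |v' y|) * (μ {ω | ε < |Y ω - y|}).toReal := by
  have hY_mem : ∀ᵐ ω ∂μ, Y ω ∈ Icc (-C) C := hbound.mono fun ω h => abs_le.1 h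
  have hy_mem : y ∈ Icc (-C) C := abs_le.1 <| by
    simpa [hy] using norm_integral_le_of_norm_le_const (f := Y) hbound
  have hH₀ : 0 ≤ H := (abs_nonneg _).trans (hH y ⟨by linarith, by linarith⟩)
  have hvY : Integrable (fun ω => v (Y ω)) μ := .of_bound
    (hv.comp_aemeasurable hY).aestronglyMeasurable vbar (hY_mem.mono fun ω h => hvbd _ h)
  subst hy
  exact abs_integral_comp_sub_comp_integral_le (.of_bound hY.aestronglyMeasurable C hbound) hvY
    _ (nullMeasurableSet_lt aemeasurable_const (hY.sub_const _).abs) (by positivity)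
    (.of_forall fun ω hω => abs_sub_sub_mul_sub_le_of_abs_deriv2_le hderiv1 hderiv2 hH
      (not_lt.1 hω))
    (hY_mem.mono fun ω hω _ => abs_sub_sub_mul_sub_le_of_abs_le hvbd hω hy_mem _)

/-- Second-order (C²-smoothness) truncation estimate (Section 5.3): if `|Y| ≤ C` a.s.,
`v` is twice continuously differentiable on `[y - ε, y + ε]` with `|v''| ≤ H` there,
and `|v| ≤ v̄` on `[-C, C]`, then
`|E[v(Y)] - v(y)| ≤ (H/2)·ε² + (2·v̄ + 2·C·|v'(y)|)·P(|Y - y| > ε)`. -/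
theorem second_order_truncation_bound
    {Ω : Type*} [MeasurableSpace Ω] (μ : Measure Ω) [IsProbabilityMeasure μ]
    (Y : Ω → ℝ) (hY : AEMeasurable Y μ)
    (C : ℝ) (hC : 0 < C) (hbound : ∀ᵐ ω ∂μ, |Y ω| ≤ C)
    (y : ℝ) (hy : y = ∫ ω, Y ω ∂μ)
    (ε : ℝ) (hε : 0 < ε)
    (v v' v'' : ℝ → ℝ) (hv : Measurable v)
    (hderiv1 : ∀ s ∈ Set.Icc (y - ε) (y + ε),
      HasDerivWithinAt v (v' s) (Set.Icc (y - ε) (y + ε)) s)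
    (hderiv2 : ∀ s ∈ Set.Icc (y - ε) (y + ε),
      HasDerivWithinAt v' (v'' s) (Set.Icc (y - ε) (y + ε)) s)
    (hcont : ContinuousOn v'' (Set.Icc (y - ε) (y + ε)))
    (H : ℝ) (hH : ∀ s ∈ Set.Icc (y - ε) (y + ε), |v'' s| ≤ H)
    (vbar : ℝ) (hvbd : ∀ s ∈ Set.Icc (-C) C, |v s| ≤ vbar) :
    |(∫ ω, v (Y ω) ∂μ) - v y|
      ≤ H / 2 * ε ^ 2
        + (2 * vbar + 2 * C * |v' y|) * (μ {ω | ε < |Y ω - y|}).toReal :=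
  second_order_truncation_bound_general μ Y hY C hbound y hy ε hε v v' v'' hv hderiv1 hderiv2 H hH
    vbar hvbd
end

section
/- Let Y be a real random variable with |Y| < C almost surely for some C > 0, mean y := E[Y], and variance σ² := E[(Y − y)²] ∈ (0, ∞). Let ε satisfy 0 < ε < σ²/C, and let v : ℝ → ℝ be Borel measurable, twice continuously differentiable on [y − ε, y + ε] with |v''(s)| ≤ H_v on that interval, and with |v(s)| ≤ v̄ for all s ∈ [−C, C]. Then |E[v(Y)] − v(y)| ≤ (H_v/2)·ε² + (2·v̄ + 2·C·|v'(y)|)·exp(−ε²/(8σ²) + 1/4). -/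
/-!
Put `D = v(Y) - v(y) - v'(y)(Y - y)`. Since `E[Y - y] = 0`, `E[v(Y)] - v(y) = E[D]`. Where
`|Y - y| < ε`, Taylor's theorem gives `|D| ≤ (H/2)ε²`; elsewhere `|D| ≤ 2v̄ + 2C|v'(y)|`. So it
remains to bound `P(|Y - y| ≥ ε)`. With `q = ε²/σ²` this probability is at most `1`, at most `1/q`
(Chebyshev) and at most `2exp(-q/4)` (Chernoff at `t = ε/(2σ²)`, where `|t(Y - y)| ≤ 1` lets
`exp x ≤ 1 + x + x²` bound the moment generating function). On each of the ranges `q ≤ 2`,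
`2 ≤ q ≤ 4` and `q ≥ 4`, one of these bounds is below `exp(-q/8 + 1/4)`.
-/

open MeasureTheory ProbabilityTheory Real Set

theorem sub_le_half_mul_sq_of_abs_deriv_le {a b y H : ℝ} {g g' : ℝ → ℝ}
    (hg : ∀ x ∈ Icc a b, HasDerivWithinAt g (g' x) (Icc a b) x)
    (hg' : ∀ x ∈ Icc a b, |g' x| ≤ H * |x - y|) (hy : y ∈ Icc a b)
    {x : ℝ} (hx : x ∈ Icc a b) :
    g x - g y ≤ H / 2 * (x - y) ^ 2 := by
  set φ : ℝ → ℝ := fun x ↦ H / 2 * (x - y) ^ 2 - g x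
  set φ' : ℝ → ℝ := fun x ↦ H * (x - y) - g' x
  have hφ : ∀ x ∈ Icc a b, HasDerivWithinAt φ (φ' x) (Icc a b) x := by
    intro x hx
    refine (((((hasDerivAt_id x).sub_const y).pow 2).const_mul (H / 2)).hasDerivWithinAt.sub
      (hg x hx)).congr_deriv ?_
    simp only [φ', id, Nat.cast_ofNat]
    ring
  have hφ_on : ∀ {c d}, Icc c d ⊆ Icc a b → ContinuousOn φ (Icc c d) ∧
      ∀ z ∈ interior (Icc c d), HasDerivWithinAt φ (φ' z) (interior (Icc c d)) z :=
    fun hsub ↦ ⟨fun z hz ↦ (hφ z (hsub hz)).continuousWithinAt.mono hsub,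
      fun z hz ↦ (hφ z (hsub (interior_subset hz))).mono (interior_subset.trans hsub)⟩
  suffices φ y ≤ φ x by simp only [φ, sub_self] at this; linarith
  rcases le_total y x with hyx | hxy
  · obtain ⟨hc, hd⟩ := hφ_on (Icc_subset_Icc hy.1 le_rfl)
    refine monotoneOn_of_hasDerivWithinAt_nonneg (convex_Icc y b) hc hd (fun z hz ↦ ?_)
      ⟨le_rfl, hy.2⟩ ⟨hyx, hx.2⟩ hyx
    rw [interior_Icc] at hz
    have := hg' z ⟨hy.1.trans hz.1.le, hz.2.le⟩
    rw [abs_of_pos (sub_pos.2 hz.1)] at this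
    linarith [le_abs_self (g' z)]
  · obtain ⟨hc, hd⟩ := hφ_on (Icc_subset_Icc le_rfl hy.2)
    refine antitoneOn_of_hasDerivWithinAt_nonpos (convex_Icc a y) hc hd (fun z hz ↦ ?_)
      ⟨hx.1, hxy⟩ ⟨hy.1, le_rfl⟩ hxy
    rw [interior_Icc] at hz
    have := hg' z ⟨hz.1.le, hz.2.le.trans hy.2⟩
    rw [abs_of_neg (sub_neg.2 hz.2)] at this
    linarith [neg_abs_le (g' z)]

theorem abs_sub_le_half_mul_sq_of_abs_deriv_le {a b y H : ℝ} {g g' : ℝ → ℝ}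
    (hg : ∀ x ∈ Icc a b, HasDerivWithinAt g (g' x) (Icc a b) x)
    (hg' : ∀ x ∈ Icc a b, |g' x| ≤ H * |x - y|) (hy : y ∈ Icc a b)
    {x : ℝ} (hx : x ∈ Icc a b) :
    |g x - g y| ≤ H / 2 * (x - y) ^ 2 := by
  have hneg := sub_le_half_mul_sq_of_abs_deriv_le (g := fun x ↦ -g x) (g' := fun x ↦ -g' x)
    (fun x hx ↦ (hg x hx).neg) (fun x hx ↦ (abs_neg (g' x)).trans_le (hg' x hx)) hy hx
  exact abs_sub_le_iff.2 ⟨sub_le_half_mul_sq_of_abs_deriv_le hg hg' hy hx, by linarith⟩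

theorem abs_sub_sub_mul_le_half_mul_sq {a b y H : ℝ} {f f' f'' : ℝ → ℝ}
    (hf : ∀ x ∈ Icc a b, HasDerivWithinAt f (f' x) (Icc a b) x)
    (hf' : ∀ x ∈ Icc a b, HasDerivWithinAt f' (f'' x) (Icc a b) x)
    (hH : ∀ x ∈ Icc a b, |f'' x| ≤ H) (hy : y ∈ Icc a b) {x : ℝ} (hx : x ∈ Icc a b) :
    |f x - f y - f' y * (x - y)| ≤ H / 2 * (x - y) ^ 2 := by
  have hlip : ∀ x ∈ Icc a b, |f' x - f' y| ≤ H * |x - y| := fun x hx ↦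
    Convex.norm_image_sub_le_of_norm_hasDerivWithin_le hf' hH (convex_Icc a b) hy hx
  have hlin : ∀ x, HasDerivAt (fun x ↦ f' y * (x - y)) (f' y) x := fun x ↦ by
    simpa using ((hasDerivAt_id x).sub_const y).const_mul (f' y)
  have := abs_sub_le_half_mul_sq_of_abs_deriv_le
    (fun x hx ↦ (hf x hx).sub (hlin x).hasDerivWithinAt) hlip hy hx
  simpa [sub_right_comm] using this

theorem abs_mul_le_one_of_abs_le {t c x : ℝ} (hx : |x| ≤ c) (htc : |t| * c ≤ 1) :
    |t * x| ≤ 1 := by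
  rw [abs_mul]; exact (mul_le_mul_of_nonneg_left hx (abs_nonneg t)).trans htc

theorem le_exp_neg_div_eight_add_quarter {p q : ℝ} (hq : 0 < q) (h₁ : p ≤ 1) (h₂ : q * p ≤ 1)
    (h₃ : p ≤ 2 * exp (-(q / 4))) : p ≤ exp (-(q / 8) + 1 / 4) := by
  rcases le_total q 4 with hq4 | hq4
  · have hlin := add_one_le_exp (-(q / 8) + 1 / 4)
    rcases le_total q 2 with hq2 | hq2
    · linarith
    · nlinarith
  · have htwo : 2 ≤ exp (q / 8 + 1 / 4) := by
      nlinarith [quadratic_le_exp_of_nonneg (x := q / 8 + 1 / 4) (by positivity)]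
    calc p ≤ 2 * exp (-(q / 4)) := h₃
      _ ≤ exp (q / 8 + 1 / 4) * exp (-(q / 4)) := by gcongr
      _ = exp (-(q / 8) + 1 / 4) := by rw [← exp_add]; ring_nf

section

variable {Ω : Type*} [MeasurableSpace Ω] {μ : Measure Ω} {X : Ω → ℝ}

theorem sq_mul_measureReal_abs_ge_le (hX2 : Integrable (fun ω ↦ X ω ^ 2) μ) {ε : ℝ}
    (hε : 0 ≤ ε) : ε ^ 2 * μ.real {ω | ε ≤ |X ω|} ≤ ∫ ω, X ω ^ 2 ∂μ := by
  have hset : {ω | ε ≤ |X ω|} = {ω | ε ^ 2 ≤ X ω ^ 2} := by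
    ext ω
    show ε ≤ |X ω| ↔ ε ^ 2 ≤ X ω ^ 2
    rw [← sq_abs (X ω), sq_le_sq₀ hε (abs_nonneg _)]
  rw [hset]
  exact mul_meas_ge_le_integral_of_nonneg (.of_forall fun ω ↦ sq_nonneg (X ω)) hX2 (ε ^ 2)

variable [IsProbabilityMeasure μ] {c t : ℝ}

theorem integrable_sq_of_abs_le (hX : AEMeasurable X μ) (hbd : ∀ᵐ ω ∂μ, |X ω| ≤ c) :
    Integrable (fun ω ↦ X ω ^ 2) μ :=
  .of_bound (hX.pow_const 2).aestronglyMeasurable (c ^ 2) <| hbd.mono fun ω hω ↦ by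
    simpa [sq_abs] using pow_le_pow_left₀ (abs_nonneg _) hω 2

theorem mgf_le_exp_sq_mul_integral_sq (hX : AEMeasurable X μ) (hbd : ∀ᵐ ω ∂μ, |X ω| ≤ c)
    (hmean : ∫ ω, X ω ∂μ = 0) (htc : |t| * c ≤ 1) :
    mgf X μ t ≤ exp (t ^ 2 * ∫ ω, X ω ^ 2 ∂μ) := by
  have hXint : Integrable X μ := .of_bound hX.aestronglyMeasurable c hbd
  have hX2int := integrable_sq_of_abs_le hX hbd
  have hquad : ∀ᵐ ω ∂μ, exp (t * X ω) ≤ 1 + t * X ω + t ^ 2 * X ω ^ 2 := hbd.mono fun ω hω ↦ by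
    linarith [le_abs_self (exp (t * X ω) - 1 - t * X ω),
      abs_exp_sub_one_sub_id_le (abs_mul_le_one_of_abs_le hω htc),
      mul_pow t (X ω) 2]
  have hlin : Integrable (fun ω ↦ 1 + t * X ω) μ := (integrable_const 1).add (hXint.const_mul t)
  calc mgf X μ t ≤ ∫ ω, (1 + t * X ω + t ^ 2 * X ω ^ 2) ∂μ :=
        integral_mono_of_nonneg (.of_forall fun ω ↦ (exp_pos _).le)
          (hlin.add (hX2int.const_mul _)) hquad
    _ = t ^ 2 * ∫ ω, X ω ^ 2 ∂μ + 1 := by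
        rw [integral_add hlin (hX2int.const_mul _),
          integral_add (integrable_const 1) (hXint.const_mul t), integral_const_mul,
          integral_const_mul, hmean]
        simp [add_comm]
    _ ≤ exp (t ^ 2 * ∫ ω, X ω ^ 2 ∂μ) := add_one_le_exp _

theorem measureReal_ge_le_exp_of_abs_le (hX : AEMeasurable X μ) (hbd : ∀ᵐ ω ∂μ, |X ω| ≤ c)
    (hmean : ∫ ω, X ω ∂μ = 0) (ht : 0 ≤ t) (htc : t * c ≤ 1) (ε : ℝ) :
    μ.real {ω | ε ≤ X ω} ≤ exp (-t * ε + t ^ 2 * ∫ ω, X ω ^ 2 ∂μ) := by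
  rw [← abs_of_nonneg ht] at htc
  have hexp_int : Integrable (fun ω ↦ exp (t * X ω)) μ :=
    .of_bound (measurable_exp.comp_aemeasurable (hX.const_mul t)).aestronglyMeasurable
      (exp 1) <| hbd.mono fun ω hω ↦ by
        rw [norm_of_nonneg (exp_pos _).le, exp_le_exp]
        exact (le_abs_self _).trans (abs_mul_le_one_of_abs_le hω htc)
  calc μ.real {ω | ε ≤ X ω} ≤ exp (-t * ε) * mgf X μ t := measure_ge_le_exp_mul_mgf ε ht hexp_int
    _ ≤ exp (-t * ε) * exp (t ^ 2 * ∫ ω, X ω ^ 2 ∂μ) :=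
        mul_le_mul_of_nonneg_left (mgf_le_exp_sq_mul_integral_sq hX hbd hmean htc) (exp_pos _).le
    _ = _ := (exp_add _ _).symm

theorem measureReal_abs_ge_le_two_mul_exp (hX : AEMeasurable X μ) (hbd : ∀ᵐ ω ∂μ, |X ω| ≤ c)
    (hmean : ∫ ω, X ω ∂μ = 0) {σ2 ε : ℝ} (hσ2 : ∫ ω, X ω ^ 2 ∂μ = σ2) (hσ2pos : 0 < σ2)
    (hε : 0 ≤ ε) (hεc : ε * c ≤ 2 * σ2) :
    μ.real {ω | ε ≤ |X ω|} ≤ 2 * exp (-(ε ^ 2 / (4 * σ2))) := by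
  set t := ε / (2 * σ2)
  have ht : 0 ≤ t := by positivity
  have htc : t * c ≤ 1 := by
    rw [div_mul_eq_mul_div, div_le_one (by positivity)]; exact hεc
  have hexponent : -t * ε + t ^ 2 * σ2 = -(ε ^ 2 / (4 * σ2)) := by
    simp only [t]; field_simp; ring
  have hupper := measureReal_ge_le_exp_of_abs_le hX hbd hmean ht htc ε
  have hlower := measureReal_ge_le_exp_of_abs_le (X := fun ω ↦ -X ω) hX.neg
    (by simpa only [abs_neg] using hbd) (by rw [integral_neg, hmean, neg_zero]) ht htc ε
  simp only [neg_sq, hσ2, hexponent] at hupper hlower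
  calc μ.real {ω | ε ≤ |X ω|} ≤ μ.real ({ω | ε ≤ X ω} ∪ {ω | ε ≤ -X ω}) :=
        measureReal_mono fun ω (hω : ε ≤ |X ω|) ↦ (le_abs.1 hω : ε ≤ X ω ∨ ε ≤ -X ω)
    _ ≤ μ.real {ω | ε ≤ X ω} + μ.real {ω | ε ≤ -X ω} := measureReal_union_le _ _
    _ ≤ 2 * exp (-(ε ^ 2 / (4 * σ2))) := by linarith

theorem measureReal_abs_ge_le_exp (hX : AEMeasurable X μ) (hbd : ∀ᵐ ω ∂μ, |X ω| ≤ c)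
    (hmean : ∫ ω, X ω ∂μ = 0) {σ2 ε : ℝ} (hσ2 : ∫ ω, X ω ^ 2 ∂μ = σ2) (hσ2pos : 0 < σ2)
    (hε : 0 < ε) (hεc : ε * c ≤ 2 * σ2) :
    μ.real {ω | ε ≤ |X ω|} ≤ exp (-(ε ^ 2 / (8 * σ2)) + 1 / 4) := by
  have hchebyshev := sq_mul_measureReal_abs_ge_le (integrable_sq_of_abs_le hX hbd) hε.le
  have hchernoff := measureReal_abs_ge_le_two_mul_exp hX hbd hmean hσ2 hσ2pos hε.le hεc
  rw [hσ2] at hchebyshev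
  convert le_exp_neg_div_eight_add_quarter (q := ε ^ 2 / σ2) (by positivity) measureReal_le_one
    (by rwa [div_mul_eq_mul_div, div_le_one hσ2pos]) (by convert hchernoff using 4; ring)
    using 3
  ring

theorem abs_integral_le_add_mul_measureReal {f : Ω → ℝ} {s : Set Ω} (hs : NullMeasurableSet s μ)
    {a b : ℝ} (hf : ∀ᵐ ω ∂μ, |f ω| ≤ a + s.indicator (fun _ ↦ b) ω) :
    |∫ ω, f ω ∂μ| ≤ a + b * μ.real s := by
  have hind : Integrable (s.indicator fun _ ↦ b) μ := (integrable_const b).indicator₀ hs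
  calc |∫ ω, f ω ∂μ| ≤ ∫ ω, (a + s.indicator (fun _ ↦ b) ω) ∂μ :=
        norm_integral_le_of_norm_le (f := f) (g := fun ω ↦ a + s.indicator (fun _ ↦ b) ω)
          ((integrable_const a).add hind) hf
    _ = a + b * μ.real s := by
        rw [integral_add (integrable_const a) hind, integral_indicator₀ hs, setIntegral_const]
        simp [mul_comm]

end

theorem abs_sub_sub_mul_le_add_indicator {v v' v'' : ℝ → ℝ} {y ε H vbar C s : ℝ} (hε : 0 ≤ ε)
    (hderiv1 : ∀ s ∈ Icc (y - ε) (y + ε), HasDerivWithinAt v (v' s) (Icc (y - ε) (y + ε)) s)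
    (hderiv2 : ∀ s ∈ Icc (y - ε) (y + ε), HasDerivWithinAt v' (v'' s) (Icc (y - ε) (y + ε)) s)
    (hH : ∀ s ∈ Icc (y - ε) (y + ε), |v'' s| ≤ H) (hvbd : ∀ s ∈ Icc (-C) C, |v s| ≤ vbar)
    (hy : |y| ≤ C) (hs : |s| ≤ C) :
    |v s - v y - v' y * (s - y)|
      ≤ H / 2 * ε ^ 2 + {s | ε ≤ |s - y|}.indicator (fun _ ↦ 2 * vbar + 2 * C * |v' y|) s := by
  have hyI : y ∈ Icc (y - ε) (y + ε) := ⟨by linarith, by linarith⟩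
  have hH0 : 0 ≤ H := (abs_nonneg _).trans (hH y hyI)
  by_cases hfar : ε ≤ |s - y|
  · rw [indicator_of_mem (show s ∈ {s | ε ≤ |s - y|} from hfar)]
    have hvs := hvbd s (abs_le.1 hs)
    have hvy := hvbd y (abs_le.1 hy)
    have hlin : |v' y * (s - y)| ≤ 2 * C * |v' y| := by
      rw [abs_mul, mul_comm]
      exact mul_le_mul_of_nonneg_right ((abs_sub _ _).trans (by linarith)) (abs_nonneg _)
    linarith [abs_sub (v s - v y) (v' y * (s - y)), abs_sub (v s) (v y),
      mul_nonneg (div_nonneg hH0 two_pos.le) (sq_nonneg ε)]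
  · rw [indicator_of_notMem (show s ∉ {s | ε ≤ |s - y|} from hfar), add_zero]
    push Not at hfar
    have hsI : s ∈ Icc (y - ε) (y + ε) := by constructor <;> linarith [abs_lt.1 hfar]
    calc |v s - v y - v' y * (s - y)| ≤ H / 2 * (s - y) ^ 2 :=
          abs_sub_sub_mul_le_half_mul_sq hderiv1 hderiv2 hH hyI hsI
      _ ≤ H / 2 * ε ^ 2 := mul_le_mul_of_nonneg_left
          (sq_le_sq.2 (hfar.le.trans_eq (abs_of_nonneg hε).symm)) (div_nonneg hH0 two_pos.le)

theorem second_order_bound_with_bernstein_general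
    {Ω : Type*} [MeasurableSpace Ω] (μ : Measure Ω) [IsProbabilityMeasure μ]
    (Y : Ω → ℝ) (hY : AEMeasurable Y μ)
    (C : ℝ) (hC : 0 < C) (hbound : ∀ᵐ ω ∂μ, |Y ω| < C)
    (y : ℝ) (hy : y = ∫ ω, Y ω ∂μ)
    (σ2 : ℝ) (hσ2 : σ2 = ∫ ω, (Y ω - y) ^ 2 ∂μ) (hσ2pos : 0 < σ2)
    (ε : ℝ) (hε : 0 < ε) (hεσ : ε < σ2 / C)
    (v v' v'' : ℝ → ℝ) (hv : Measurable v)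
    (hderiv1 : ∀ s ∈ Set.Icc (y - ε) (y + ε),
      HasDerivWithinAt v (v' s) (Set.Icc (y - ε) (y + ε)) s)
    (hderiv2 : ∀ s ∈ Set.Icc (y - ε) (y + ε),
      HasDerivWithinAt v' (v'' s) (Set.Icc (y - ε) (y + ε)) s)
    (H : ℝ) (hH : ∀ s ∈ Set.Icc (y - ε) (y + ε), |v'' s| ≤ H)
    (vbar : ℝ) (hvbd : ∀ s ∈ Set.Icc (-C) C, |v s| ≤ vbar) :
    |(∫ ω, v (Y ω) ∂μ) - v y|
      ≤ H / 2 * ε ^ 2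
        + (2 * vbar + 2 * C * |v' y|) * Real.exp (-(ε ^ 2 / (8 * σ2)) + 1 / 4) := by
  have hbound' : ∀ᵐ ω ∂μ, |Y ω| ≤ C := hbound.mono fun ω h ↦ h.le
  have hYint : Integrable Y μ := .of_bound hY.aestronglyMeasurable C hbound'
  have hyC : |y| ≤ C := by simpa [hy] using norm_integral_le_of_norm_le_const (f := Y) hbound'
  have hmean : ∫ ω, (Y ω - y) ∂μ = 0 := by
    rw [integral_sub hYint (integrable_const y), integral_const, hy]; simp
  have htail := measureReal_abs_ge_le_exp (c := 2 * C) (hY.sub_const y)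
    (hbound'.mono fun ω h ↦ (abs_sub _ _).trans (by linarith)) hmean hσ2.symm hσ2pos hε
    (by rw [lt_div_iff₀ hC] at hεσ; linarith)
  have hvY : Integrable (fun ω ↦ v (Y ω)) μ :=
    .of_bound (hv.comp_aemeasurable hY).aestronglyMeasurable vbar
      (hbound'.mono fun ω h ↦ hvbd _ (abs_le.1 h))
  have hremainder : (∫ ω, v (Y ω) ∂μ) - v y = ∫ ω, (v (Y ω) - v y - v' y * (Y ω - y)) ∂μ := by
    have hlin : Integrable (fun ω ↦ v' y * (Y ω - y)) μ :=
      (hYint.sub (integrable_const y)).const_mul _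
    rw [integral_sub (f := fun ω ↦ v (Y ω) - v y) (hvY.sub (integrable_const _)) hlin,
      integral_const_mul, hmean, integral_sub hvY (integrable_const _)]
    simp
  have hK : 0 ≤ 2 * vbar + 2 * C * |v' y| := by
    have := (abs_nonneg _).trans (hvbd y (abs_le.1 hyC)); positivity
  rw [hremainder]
  calc _ ≤ H / 2 * ε ^ 2 + (2 * vbar + 2 * C * |v' y|) * μ.real {ω | ε ≤ |Y ω - y|} :=
        abs_integral_le_add_mul_measureReal
          (nullMeasurableSet_le aemeasurable_const (hY.sub_const y).abs)
          (hbound'.mono fun ω h ↦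
            abs_sub_sub_mul_le_add_indicator hε.le hderiv1 hderiv2 hH hvbd hyC h)
    _ ≤ _ := by gcongr

/-- The paper's displayed second-order bound (equation (45), Section 5.3): combining the
second-order truncation estimate with the Bernstein tail bound, for `0 < ε < σ²/C`,
`|E[v(Y)] - v(y)| ≤ (H/2)·ε² + (2·v̄ + 2·C·|v'(y)|)·exp(-ε²/(8σ²) + 1/4)`. -/
theorem second_order_bound_with_bernstein
    {Ω : Type*} [MeasurableSpace Ω] (μ : Measure Ω) [IsProbabilityMeasure μ]
    (Y : Ω → ℝ) (hY : AEMeasurable Y μ)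
    (C : ℝ) (hC : 0 < C) (hbound : ∀ᵐ ω ∂μ, |Y ω| < C)
    (y : ℝ) (hy : y = ∫ ω, Y ω ∂μ)
    (σ2 : ℝ) (hσ2 : σ2 = ∫ ω, (Y ω - y) ^ 2 ∂μ) (hσ2pos : 0 < σ2)
    (ε : ℝ) (hε : 0 < ε) (hεσ : ε < σ2 / C)
    (v v' v'' : ℝ → ℝ) (hv : Measurable v)
    (hderiv1 : ∀ s ∈ Set.Icc (y - ε) (y + ε),
      HasDerivWithinAt v (v' s) (Set.Icc (y - ε) (y + ε)) s)
    (hderiv2 : ∀ s ∈ Set.Icc (y - ε) (y + ε),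
      HasDerivWithinAt v' (v'' s) (Set.Icc (y - ε) (y + ε)) s)
    (hcont : ContinuousOn v'' (Set.Icc (y - ε) (y + ε)))
    (H : ℝ) (hH : ∀ s ∈ Set.Icc (y - ε) (y + ε), |v'' s| ≤ H)
    (vbar : ℝ) (hvbd : ∀ s ∈ Set.Icc (-C) C, |v s| ≤ vbar) :
    |(∫ ω, v (Y ω) ∂μ) - v y|
      ≤ H / 2 * ε ^ 2
        + (2 * vbar + 2 * C * |v' y|) * Real.exp (-(ε ^ 2 / (8 * σ2)) + 1 / 4) :=
  second_order_bound_with_bernstein_general μ Y hY C hC hbound y hy σ2 hσ2 hσ2pos ε hε hεσ v v' v''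
    hv hderiv1 hderiv2 H hH vbar hvbd
end

section
/- Let z* ∈ ℝᵈ and ε > 0, and let g : ℝᵈ → ℝᵐ be a map each of whose components g_j (1 ≤ j ≤ m) is twice continuously differentiable on the closed ball B̄(z*, ε), with G_j := ‖∇g_j(z*)‖ and with H_j an upper bound for the operator norm of the Hessian of g_j at every point of B̄(z*, ε). Let Z be a Borel measurable random vector in ℝᵈ with Z ∈ B̄(z*, ε) almost surely, and let Ξ be a square-integrable random vector in ℝᵐ. Then E[‖g(Z) + Ξ − g(z*)‖²] ≤ 3·E[‖Ξ‖²] + (3·∑_{j=1}^{m} G_j² + (3/4)·ε²·∑_{j=1}^{m} H_j²)·E[‖Z − z*‖²]. -/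
/-!
Pointwise, `g z + ξ - g z*` is the sum of the noise `ξ`, the linear term `Dg(z*)(z - z*)` and
the Taylor remainder, so its square is at most three times the sum of their squares.
Componentwise, the linear term is at most `G j ‖z - z*‖` and, by the second-order Taylor bound,
the remainder at most `H j / 2 · ‖z - z*‖² ≤ H j / 2 · ε ‖z - z*‖` on the ball. Taking
expectations gives the estimate; the bound is integrable because `Z` is bounded.
-/

open MeasureTheory

section Taylor

variable {E F : Type*} [NormedAddCommGroup E] [NormedSpace ℝ E]
  [NormedAddCommGroup F] [NormedSpace ℝ F] {s : Set E}

/-- Along the segment `t ↦ a + t • (z - a)` the remainder has derivative of norm at most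
`K t ‖z - a‖²`; compare it with `K / 2 * t² ‖z - a‖²`. -/
theorem Convex.norm_image_sub_sub_le_of_lipschitzOn_hasFDerivWithinAt (hs : Convex ℝ s)
    {f : E → F} {f' : E → E →L[ℝ] F} {K : ℝ}
    (hf : ∀ x ∈ s, HasFDerivWithinAt f (f' x) s x)
    (hf' : ∀ x ∈ s, ∀ y ∈ s, ‖f' x - f' y‖ ≤ K * ‖x - y‖)
    {a z : E} (ha : a ∈ s) (hz : z ∈ s) :
    ‖f z - f a - f' a (z - a)‖ ≤ K / 2 * ‖z - a‖ ^ 2 := by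
  set v := z - a
  let c : ℝ → E := fun t => a + t • v
  have hc : Set.MapsTo c (Set.Icc 0 1) s := fun t ht => by
    simpa [c, v, AffineMap.lineMap_apply_module', add_comm] using
      hs.lineMap_mem ha hz ht
  have hderiv : ∀ t ∈ Set.Ico (0 : ℝ) 1, HasDerivWithinAt
      (fun t => f (c t) - f a - t • f' a v) (f' (c t) v - f' a v) (Set.Ici t) t := by
    intro t ht
    have hct : HasDerivWithinAt c v (Set.Icc 0 1) t := by
      simpa [c] using (((hasDerivAt_id t).smul_const v).const_add a).hasDerivWithinAt
    have hfc := (hf (c t) (hc (Set.Ico_subset_Icc_self ht))).comp_hasDerivWithinAt t hct hc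
    refine ((hfc.sub_const (f a)).sub ?_).mono_of_mem_nhdsWithin
      (Icc_mem_nhdsGE_of_mem ⟨ht.1, ht.2⟩)
    simpa using (hasDerivWithinAt_id t _).smul_const (f' a v)
  have hbound : ∀ t ∈ Set.Ico (0 : ℝ) 1,
      ‖f' (c t) v - f' a v‖ ≤ K * ‖v‖ ^ 2 * t := by
    intro t ht
    have hca : c t - a = t • v := by simp [c]
    calc ‖f' (c t) v - f' a v‖ = ‖(f' (c t) - f' a) v‖ := rfl
      _ ≤ ‖f' (c t) - f' a‖ * ‖v‖ := (f' (c t) - f' a).le_opNorm v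
      _ ≤ K * ‖c t - a‖ * ‖v‖ := by
        gcongr; exact hf' _ (hc (Set.Ico_subset_Icc_self ht)) a ha
      _ = K * ‖v‖ ^ 2 * t := by
        rw [hca, norm_smul, Real.norm_of_nonneg ht.1]; ring
  have hcont : ContinuousOn (fun t => f (c t) - f a - t • f' a v) (Set.Icc 0 1) := by
    have hfs : ContinuousOn f s := fun x hx => (hf x hx).continuousWithinAt
    exact ((hfs.comp (by fun_prop) hc).sub continuousOn_const).sub (by fun_prop)
  have key := image_norm_le_of_norm_deriv_right_le_deriv_boundary hcont hderiv
    (B := fun t => K / 2 * ‖v‖ ^ 2 * t ^ 2) (by simp [c])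
    (fun t => by simpa using ((hasDerivAt_pow 2 t).const_mul (K / 2 * ‖v‖ ^ 2))) ?_
    (Set.right_mem_Icc.2 zero_le_one)
  · simpa [c, v] using key
  · intro t ht
    convert hbound t ht using 1
    ring

theorem Convex.norm_fderivWithin_sub_le_of_norm_iteratedFDerivWithin_two_le (hs : Convex ℝ s)
    (hus : UniqueDiffOn ℝ s) {f : E → F} (hf : ContDiffOn ℝ 2 f s) {H : ℝ}
    (hH : ∀ x ∈ s, ‖iteratedFDerivWithin ℝ 2 f s x‖ ≤ H) {x y : E} (hx : x ∈ s)
    (hy : y ∈ s) :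
    ‖fderivWithin ℝ f s x - fderivWithin ℝ f s y‖ ≤ H * ‖x - y‖ := by
  refine hs.norm_image_sub_le_of_norm_fderivWithin_le
    ((hf.fderivWithin hus (m := 1) le_rfl).differentiableOn one_ne_zero) (fun w hw => ?_) hy hx
  rw [← norm_iteratedFDerivWithin_one _ (hus w hw), norm_iteratedFDerivWithin_fderivWithin hus hw]
  exact hH w hw

theorem Convex.norm_image_sub_sub_fderivWithin_le_of_contDiffOn_two (hs : Convex ℝ s)
    (hus : UniqueDiffOn ℝ s) {f : E → F} (hf : ContDiffOn ℝ 2 f s) {H : ℝ}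
    (hH : ∀ x ∈ s, ‖iteratedFDerivWithin ℝ 2 f s x‖ ≤ H) {a z : E} (ha : a ∈ s)
    (hz : z ∈ s) :
    ‖f z - f a - fderivWithin ℝ f s a (z - a)‖ ≤ H / 2 * ‖z - a‖ ^ 2 :=
  hs.norm_image_sub_sub_le_of_lipschitzOn_hasFDerivWithinAt
    (fun x hx => ((hf.differentiableOn two_ne_zero) x hx).hasFDerivWithinAt)
    (fun _ hx _ hy =>
      hs.norm_fderivWithin_sub_le_of_norm_iteratedFDerivWithin_two_le hus hf hH hx hy)
    ha hz

end Taylor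

theorem EuclideanSpace.norm_sq_le_sum_sq_of_abs_le {ι : Type*} [Fintype ι]
    {v : EuclideanSpace ℝ ι} {b : ι → ℝ} (h : ∀ i, |v i| ≤ b i) :
    ‖v‖ ^ 2 ≤ ∑ i, b i ^ 2 := by
  rw [EuclideanSpace.real_norm_sq_eq]
  refine Finset.sum_le_sum fun i _ => ?_
  exact sq_le_sq' (neg_le_of_abs_le (h i)) (le_of_abs_le (h i))

theorem norm_add_add_sq_le {E : Type*} [SeminormedAddCommGroup E] (x y z : E) :
    ‖x + y + z‖ ^ 2 ≤ 3 * (‖x‖ ^ 2 + ‖y‖ ^ 2 + ‖z‖ ^ 2) := by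
  have h := norm_add₃_le (a := x) (b := y) (c := z)
  nlinarith [norm_nonneg (x + y + z), sq_nonneg (‖x‖ - ‖y‖), sq_nonneg (‖y‖ - ‖z‖),
    sq_nonneg (‖x‖ - ‖z‖)]

theorem norm_sq_image_add_sub_le {E ι : Type*} [NormedAddCommGroup E] [NormedSpace ℝ E]
    [Fintype ι] {s : Set E} (hs : Convex ℝ s) (hus : UniqueDiffOn ℝ s)
    {g : E → EuclideanSpace ℝ ι} (hg : ∀ j, ContDiffOn ℝ 2 (fun z => g z j) s)
    {a z : E} (ha : a ∈ s) (hz : z ∈ s) {ε : ℝ} (hza : ‖z - a‖ ≤ ε) {G H : ι → ℝ}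
    (hG : ∀ j, ‖fderivWithin ℝ (fun z => g z j) s a‖ ≤ G j)
    (hH : ∀ j, ∀ x ∈ s, ‖iteratedFDerivWithin ℝ 2 (fun z => g z j) s x‖ ≤ H j)
    (ξ : EuclideanSpace ℝ ι) :
    ‖g z + ξ - g a‖ ^ 2
      ≤ 3 * ‖ξ‖ ^ 2
        + (3 * ∑ j, G j ^ 2 + 3 / 4 * ε ^ 2 * ∑ j, H j ^ 2) * ‖z - a‖ ^ 2 := by
  set r := ‖z - a‖
  let L : EuclideanSpace ℝ ι :=
    WithLp.toLp 2 fun j => fderivWithin ℝ (fun z => g z j) s a (z - a)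
  have hL : ‖L‖ ^ 2 ≤ (∑ j, G j ^ 2) * r ^ 2 := by
    rw [Finset.sum_mul]
    refine (EuclideanSpace.norm_sq_le_sum_sq_of_abs_le (b := fun j => G j * r)
      fun j => ?_).trans_eq (by simp only [mul_pow])
    exact ((fderivWithin ℝ (fun z => g z j) s a).le_opNorm _).trans
      (mul_le_mul_of_nonneg_right (hG j) (norm_nonneg _))
  have hR : ‖g z - g a - L‖ ^ 2 ≤ (1 / 4 * ε ^ 2 * ∑ j, H j ^ 2) * r ^ 2 := by
    have hr : r ^ 2 ≤ ε ^ 2 := pow_le_pow_left₀ (norm_nonneg _) hza 2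
    refine (EuclideanSpace.norm_sq_le_sum_sq_of_abs_le (b := fun j => H j / 2 * r ^ 2)
      fun j => hs.norm_image_sub_sub_fderivWithin_le_of_contDiffOn_two hus (hg j) (hH j)
        ha hz).trans ?_
    rw [Finset.mul_sum, Finset.sum_mul]
    gcongr with j
    nlinarith [mul_le_mul_of_nonneg_left hr (by positivity : 0 ≤ H j ^ 2 * r ^ 2)]
  calc ‖g z + ξ - g a‖ ^ 2 = ‖ξ + L + (g z - g a - L)‖ ^ 2 := by congr 2; abel
    _ ≤ 3 * (‖ξ‖ ^ 2 + ‖L‖ ^ 2 + ‖g z - g a - L‖ ^ 2) := norm_add_add_sq_le _ _ _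
    _ ≤ _ := by linarith

theorem second_moment_propagation_general
    {Ω : Type*} [MeasurableSpace Ω] (μ : Measure Ω) [IsProbabilityMeasure μ]
    (d m : ℕ)
    (zstar : EuclideanSpace ℝ (Fin d)) (ε : ℝ) (hε : 0 < ε)
    (g : EuclideanSpace ℝ (Fin d) → EuclideanSpace ℝ (Fin m))
    (hg : ∀ j : Fin m, ContDiffOn ℝ 2 (fun z => g z j) (Metric.closedBall zstar ε))
    (G H : Fin m → ℝ)
    (hG : ∀ j : Fin m, G j = ‖gradient (fun z => g z j) zstar‖)
    (hH : ∀ j : Fin m, ∀ x ∈ Metric.closedBall zstar ε,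
      ‖iteratedFDerivWithin ℝ 2 (fun z => g z j) (Metric.closedBall zstar ε) x‖ ≤ H j)
    (Z : Ω → EuclideanSpace ℝ (Fin d)) (hZ : Measurable Z)
    (hZball : ∀ᵐ ω ∂μ, Z ω ∈ Metric.closedBall zstar ε)
    (Ξ : Ω → EuclideanSpace ℝ (Fin m))
    (hΞsq : Integrable (fun ω => ‖Ξ ω‖ ^ 2) μ) :
    ∫ ω, ‖g (Z ω) + Ξ ω - g zstar‖ ^ 2 ∂μ
      ≤ 3 * ∫ ω, ‖Ξ ω‖ ^ 2 ∂μ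
        + (3 * ∑ j, (G j) ^ 2 + 3 / 4 * ε ^ 2 * ∑ j, (H j) ^ 2)
          * ∫ ω, ‖Z ω - zstar‖ ^ 2 ∂μ := by
  set C := 3 * ∑ j, (G j) ^ 2 + 3 / 4 * ε ^ 2 * ∑ j, (H j) ^ 2
  have hs := convex_closedBall zstar ε
  have hnhds : Metric.closedBall zstar ε ∈ nhds zstar := Metric.closedBall_mem_nhds zstar hε
  have hus : UniqueDiffOn ℝ (Metric.closedBall zstar ε) :=
    uniqueDiffOn_convex hs ⟨zstar, mem_interior_iff_mem_nhds.2 hnhds⟩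
  have hG' :
      ∀ j, ‖fderivWithin ℝ (fun z => g z j) (Metric.closedBall zstar ε) zstar‖ ≤ G j :=
    fun j => by rw [fderivWithin_of_mem_nhds hnhds, hG j, gradient, LinearIsometryEquiv.norm_map]
  have hpointwise : ∀ᵐ ω ∂μ, ‖g (Z ω) + Ξ ω - g zstar‖ ^ 2
      ≤ 3 * ‖Ξ ω‖ ^ 2 + C * ‖Z ω - zstar‖ ^ 2 := by
    filter_upwards [hZball] with ω hω
    exact norm_sq_image_add_sub_le hs hus hg (Metric.mem_closedBall_self hε.le) hω
      (mem_closedBall_iff_norm.1 hω) hG' hH (Ξ ω)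
  have hZsq : Integrable (fun ω => ‖Z ω - zstar‖ ^ 2) μ := by
    refine .of_bound ((hZ.sub_const zstar).norm.pow_const 2).aestronglyMeasurable (ε ^ 2) ?_
    filter_upwards [hZball] with ω hω
    rw [Real.norm_of_nonneg (by positivity)]
    exact pow_le_pow_left₀ (norm_nonneg _) (mem_closedBall_iff_norm.1 hω) 2
  calc ∫ ω, ‖g (Z ω) + Ξ ω - g zstar‖ ^ 2 ∂μ
      ≤ ∫ ω, (3 * ‖Ξ ω‖ ^ 2 + C * ‖Z ω - zstar‖ ^ 2) ∂μ :=
        integral_mono_of_nonneg (.of_forall fun _ => by positivity)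
          ((hΞsq.const_mul 3).add (hZsq.const_mul C)) hpointwise
    _ = 3 * ∫ ω, ‖Ξ ω‖ ^ 2 ∂μ + C * ∫ ω, ‖Z ω - zstar‖ ^ 2 ∂μ := by
        rw [integral_add (hΞsq.const_mul 3) (hZsq.const_mul C), integral_const_mul,
          integral_const_mul]

/-- One-step second-moment propagation estimate (Step One of the proof of Theorem 4): for
`g : ℝᵈ → ℝᵐ` with components `g_j` that are C² on the closed ball `B̄(z*, ε)`, with
`G j = ‖∇g_j(z*)‖` and `H j` an upper bound for the operator norm of the Hessian of `g_j`
on the ball, a random vector `Z` in the ball a.s. and a square-integrable noise `Ξ`,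
`E[‖g(Z) + Ξ - g(z*)‖²] ≤ 3·E[‖Ξ‖²] + (3·∑ G j² + (3/4)·ε²·∑ H j²)·E[‖Z - z*‖²]`. -/
theorem second_moment_propagation
    {Ω : Type*} [MeasurableSpace Ω] (μ : Measure Ω) [IsProbabilityMeasure μ]
    (d m : ℕ)
    (zstar : EuclideanSpace ℝ (Fin d)) (ε : ℝ) (hε : 0 < ε)
    (g : EuclideanSpace ℝ (Fin d) → EuclideanSpace ℝ (Fin m))
    (hg : ∀ j : Fin m, ContDiffOn ℝ 2 (fun z => g z j) (Metric.closedBall zstar ε))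
    (G H : Fin m → ℝ)
    (hG : ∀ j : Fin m, G j = ‖gradient (fun z => g z j) zstar‖)
    (hH : ∀ j : Fin m, ∀ x ∈ Metric.closedBall zstar ε,
      ‖iteratedFDerivWithin ℝ 2 (fun z => g z j) (Metric.closedBall zstar ε) x‖ ≤ H j)
    (Z : Ω → EuclideanSpace ℝ (Fin d)) (hZ : Measurable Z)
    (hZball : ∀ᵐ ω ∂μ, Z ω ∈ Metric.closedBall zstar ε)
    (Ξ : Ω → EuclideanSpace ℝ (Fin m)) (hΞ : Measurable Ξ)
    (hΞsq : Integrable (fun ω => ‖Ξ ω‖ ^ 2) μ)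
    (hgZ : AEStronglyMeasurable (fun ω => g (Z ω)) μ) :
    ∫ ω, ‖g (Z ω) + Ξ ω - g zstar‖ ^ 2 ∂μ
      ≤ 3 * ∫ ω, ‖Ξ ω‖ ^ 2 ∂μ
        + (3 * ∑ j, (G j) ^ 2 + 3 / 4 * ε ^ 2 * ∑ j, (H j) ^ 2)
          * ∫ ω, ‖Z ω - zstar‖ ^ 2 ∂μ :=
  second_moment_propagation_general μ d m zstar ε hε g hg G H hG hH Z hZ hZball Ξ hΞsq
end
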